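/- Top-K preservation under local filtering: let S be a finite set of candidates with weights in ℝ, and suppose the global top-K answers are formed by combining local candidates at each vertex such that the weight of a combined answer is monotone nondecreasing in the weight of each local constituent. If at each vertex only the K smallest-weight local candidates for each keyword-set are retained, then for every global answer A built from discarded local candidates there exists a global answer A' built from retained candidates with weight(A') ≤ weight(A); hence the global top-K answer weights are unchanged by the filtering. -/
import Mathlib


/-- Top-K preservation under local filtering: if for each coordinate `i` the
retained set `R i` consists of the `K` smallest elements of the local
candidate set `C i` (so `R i ⊆ C i`, `|R i| = min K |C i|`, and every retained
element is at most every discarded element), with `K ≥ 1` and `C i` nonempty,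
then for every choice `x` of local candidates there is a choice `y` of
retained candidates with `y` componentwise at most `x`, hence `F y ≤ F x`
for any combining function `F` monotone nondecreasing in each coordinate. -/
theorem dks_topK_filtering (N K : ℕ) (hK : 1 ≤ K)
    (C R : Fin N → Finset ℝ)
    (hsub : ∀ i, R i ⊆ C i)
    (hCne : ∀ i, (C i).Nonempty)
    (hcard : ∀ i, (R i).card = min K (C i).card)
    (hsmall : ∀ i, ∀ a ∈ R i, ∀ b ∈ C i \ R i, a ≤ b)
    (F : (Fin N → ℝ) → ℝ)
    (hmono : ∀ a b : Fin N → ℝ, (∀ i, a i ≤ b i) → F a ≤ F b) :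
    ∀ x : Fin N → ℝ, (∀ i, x i ∈ C i) →
      ∃ y : Fin N → ℝ, (∀ i, y i ∈ R i) ∧ (∀ i, y i ≤ x i) ∧ F y ≤ F x := by
  intro x hx
  have hRne : ∀ i, (R i).Nonempty := by
    intro i
    rw [← Finset.card_pos, hcard i, lt_min_iff]
    exact ⟨hK, Finset.card_pos.mpr (hCne i)⟩
  choose r hr using hRne
  set y : Fin N → ℝ := fun i => if x i ∈ R i then x i else r i with hy
  have hyR : ∀ i, y i ∈ R i := by
    intro i; simp only [hy]; split <;> [assumption; exact hr i]
  have hyle : ∀ i, y i ≤ x i := by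
    intro i; simp only [hy]; split
    · rfl
    · exact hsmall i (r i) (hr i) (x i) (Finset.mem_sdiff.mpr ⟨hx i, by assumption⟩)
  exact ⟨y, hyR, hyle, hmono y x hyle⟩
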